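/- arXiv:2002.09814 — 3 statements merged into one kernel-verified Lean document; each statement's English description precedes it below -/
import Mathlib

section
/- Let $(\Omega,\mathcal{F},\Pr)$ be a probability space and let $\{B_i\}_{i\ge 1}$ and $\{\Pi_i\}_{i\ge 1}$ be sequences of events with $B_i \subseteq \Pi_i$ for all $i$, and set $\Pi_0 = \Omega$. Then $\Pr[\bigcap_{i=1}^{\infty} B_i] \ge 1 - \sum_{i=1}^{\infty} \Pr[B_i^{\complement} \mid \Pi_{i-1}]$. -/
open MeasureTheory ProbabilityTheory ENNReal

/-- Probability aggregation: for events `B i ⊆ P i` (i ≥ 1) with `P 0 = univ`,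
`Pr[⋂ i, B i] ≥ 1 - ∑ i Pr[Bᵢᶜ | P_{i-1}]`. -/
theorem probability_aggregation {Ω : Type*} [MeasurableSpace Ω]
    (μ : Measure Ω) [IsProbabilityMeasure μ]
    (B P : ℕ → Set Ω)
    (hBmeas : ∀ i, MeasurableSet (B i)) (hPmeas : ∀ i, MeasurableSet (P i))
    (hsub : ∀ i, B (i + 1) ⊆ P (i + 1)) (hP0 : P 0 = Set.univ) :
    1 - ∑' i : ℕ, (μ[|P i]) ((B (i + 1))ᶜ) ≤ μ (⋂ i : ℕ, B (i + 1)) := by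
  classical
  set A : ℕ → Set Ω := fun i => (B (i + 1))ᶜ ∩ ⋂ j ∈ Finset.range i, B (j + 1) with hA
  have hAsub : ∀ i, A i ⊆ P i ∩ (B (i + 1))ᶜ := by
    intro i
    rcases i with _ | j
    · intro ω hω
      exact ⟨by simp [hP0], hω.1⟩
    · intro ω hω
      refine ⟨hsub j ?_, hω.1⟩
      have := hω.2
      simp only [Set.mem_iInter] at this
      exact this j (Finset.mem_range.mpr (Nat.lt_succ_self j))
  have hunion : (⋃ i, (B (i + 1))ᶜ) ⊆ ⋃ i, A i := by
    intro ω hω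
    simp only [Set.mem_iUnion, Set.mem_compl_iff] at hω
    have hk := Nat.find_spec hω
    refine Set.mem_iUnion.mpr ⟨Nat.find hω, hk, ?_⟩
    simp only [Set.mem_iInter]
    intro j hj
    by_contra hj'
    exact absurd (Nat.find_le hj') (not_le.mpr (Finset.mem_range.mp hj))
  have hcompl : μ ((⋂ i : ℕ, B (i + 1))ᶜ) ≤ ∑' i : ℕ, (μ[|P i]) ((B (i + 1))ᶜ) := by
    rw [Set.compl_iInter]
    calc μ (⋃ i, (B (i + 1))ᶜ) ≤ μ (⋃ i, A i) := measure_mono hunion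
      _ ≤ ∑' i, μ (A i) := measure_iUnion_le A
      _ ≤ ∑' i : ℕ, (μ[|P i]) ((B (i + 1))ᶜ) := by
          refine ENNReal.tsum_le_tsum fun i => ?_
          rw [cond_apply (hPmeas i)]
          calc μ (A i) ≤ μ (P i ∩ (B (i + 1))ᶜ) := measure_mono (hAsub i)
            _ ≤ (μ (P i))⁻¹ * μ (P i ∩ (B (i + 1))ᶜ) := by
                refine le_mul_of_one_le_left zero_le ?_
                rw [ENNReal.one_le_inv]
                exact prob_le_one
  have h1 : (1 : ℝ≥0∞) ≤ μ (⋂ i : ℕ, B (i + 1)) + ∑' i : ℕ, (μ[|P i]) ((B (i + 1))ᶜ) := by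
    have := measure_add_measure_compl (μ := μ) (MeasurableSet.iInter fun i => hBmeas (i + 1))
    calc (1 : ℝ≥0∞) = μ (⋂ i : ℕ, B (i + 1)) + μ ((⋂ i : ℕ, B (i + 1))ᶜ) := by
          rw [this]; simp
      _ ≤ _ := add_le_add_right hcompl _
  exact tsub_le_iff_right.mpr h1
end

section
/- In the linear model $Y = \mathbf{X}\beta + \epsilon$, let $\hat{\beta}$ be an elastic net estimate with parameters $\alpha, \lambda \ge 0$ and $D = \mathbf{X}^{\top}\mathbf{X} + \alpha I$. Suppose $\lambda \ge 2\lambda_0$ and the event $\max_{r\in[d]} (2|\epsilon^{\top} X^r|/n) \le \lambda_0$ holds, where $X^r$ is the $r$-th column of $\mathbf{X}$. Then $\frac{2}{n}\|\hat{\beta}-\beta\|_D^2 \le 3\lambda\|\beta\|_1 + \frac{8\alpha}{n}\|\beta\|_2^2$. -/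
open Matrix Finset

/-- Elastic net error bound on the good event `max_r 2|εᵀ X^r|/n ≤ λ₀` when `λ ≥ 2λ₀`. -/
theorem elastic_net_on_good_event {n d : ℕ} (hn : 1 ≤ n)
    (X : Matrix (Fin n) (Fin d) ℝ) (β βhat : Fin d → ℝ) (e : Fin n → ℝ)
    (Y : Fin n → ℝ) (hY : Y = X.mulVec β + e)
    (α lam lam0 : ℝ) (hα : 0 ≤ α) (hlam : 0 ≤ lam) (hlam2 : lam ≥ 2 * lam0)
    (hmin : ∀ β' : Fin d → ℝ,
      (1 / n) * ((∑ i, (Y i - X.mulVec βhat i) ^ 2) + 2 * α * ∑ j, (βhat j) ^ 2)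
          + lam * ∑ j, |βhat j|
        ≤ (1 / n) * ((∑ i, (Y i - X.mulVec β' i) ^ 2) + 2 * α * ∑ j, (β' j) ^ 2)
          + lam * ∑ j, |β' j|)
    (hevent : ∀ r : Fin d, 2 * |e ⬝ᵥ (fun i => X i r)| / n ≤ lam0) :
    (2 / n) * ((βhat - β) ⬝ᵥ (Xᵀ * X + α • (1 : Matrix (Fin d) (Fin d) ℝ)).mulVec (βhat - β))
      ≤ 3 * lam * ∑ j, |β j| + (8 * α / n) * ∑ j, (β j) ^ 2 := by
  have hnpos : (0:ℝ) < n := by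
    have : (1:ℝ) ≤ n := by exact_mod_cast hn
    linarith
  have hn0 : (n:ℝ) ≠ 0 := ne_of_gt hnpos
  -- notation
  set Δ : Fin d → ℝ := βhat - β with hΔdef
  set c : Fin d → ℝ := fun r => e ⬝ᵥ (fun i => X i r) with hc
  set Q : ℝ := ∑ i, (X.mulVec Δ i)^2 with hQ
  set P : ℝ := ∑ j, (Δ j)^2 with hP
  set L : ℝ := ∑ j, |Δ j| with hL
  set Bh : ℝ := ∑ j, |βhat j| with hBh
  set Bb : ℝ := ∑ j, |β j| with hBb
  set H : ℝ := ∑ j, (βhat j)^2 with hH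
  set Bq : ℝ := ∑ j, (β j)^2 with hBq
  set T : ℝ := e ⬝ᵥ X.mulVec Δ with hT
  -- quadratic form identity
  have hquad : (Δ ⬝ᵥ (Xᵀ * X + α • (1 : Matrix (Fin d) (Fin d) ℝ)).mulVec Δ)
      = Q + α * P := by
    rw [Matrix.add_mulVec, dotProduct_add]
    congr 1
    · rw [← Matrix.mulVec_mulVec, Matrix.dotProduct_mulVec, Matrix.vecMul_transpose]
      simp [hQ, dotProduct, sq]
    · rw [Matrix.smul_mulVec, Matrix.one_mulVec]
      simp only [hP, dotProduct, Pi.smul_apply, smul_eq_mul, Finset.mul_sum]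
      exact Finset.sum_congr rfl fun j _ => by ring
  -- residual identity
  have hres : ∀ i, Y i - X.mulVec βhat i = e i - X.mulVec Δ i := by
    intro i
    have h1 : X.mulVec Δ i = X.mulVec βhat i - X.mulVec β i := by
      rw [hΔdef, Matrix.mulVec_sub]; rfl
    rw [hY, h1]; simp [Pi.add_apply]; ring
  -- sum-of-squares expansion
  have hexp : ∑ i, (Y i - X.mulVec βhat i)^2
      = ∑ i, (e i)^2 - 2 * T + Q := by
    have h1 : ∀ i, (Y i - X.mulVec βhat i)^2
        = (e i)^2 - 2 * (e i * X.mulVec Δ i) + (X.mulVec Δ i)^2 := by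
      intro i; rw [hres i]; ring
    rw [Finset.sum_congr rfl fun i _ => h1 i]
    have hTsum : T = ∑ i, e i * X.mulVec Δ i := rfl
    rw [Finset.sum_add_distrib, Finset.sum_sub_distrib, ← Finset.mul_sum, ← hTsum, hQ]
  -- dot product as sum over columns
  have hTid : T = ∑ r, c r * Δ r := by
    rw [hT, Matrix.dotProduct_mulVec]
    rfl
  -- bound on the cross term
  have hcross : 2 * T ≤ lam0 * n * L := by
    rw [hTid, hL, Finset.mul_sum, Finset.mul_sum]
    refine Finset.sum_le_sum fun r _ => ?_
    have h1 : 2 * |c r| ≤ lam0 * n := by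
      have := hevent r
      rw [div_le_iff₀ hnpos] at this
      linarith
    calc 2 * (c r * Δ r) ≤ |2 * (c r * Δ r)| := le_abs_self _
      _ = 2 * |c r| * |Δ r| := by rw [abs_mul, abs_mul]; simp [abs_of_nonneg]; ring
      _ ≤ lam0 * n * |Δ r| := mul_le_mul_of_nonneg_right h1 (abs_nonneg _)
  have hnL : 0 ≤ (n:ℝ) * L := by
    apply mul_nonneg hnpos.le
    exact Finset.sum_nonneg fun j _ => abs_nonneg _
  have hcross2 : 4 * T ≤ lam * ((n:ℝ) * L) := by
    have h2 : lam0 * ((n:ℝ) * L) ≤ (lam/2) * ((n:ℝ) * L) :=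
      mul_le_mul_of_nonneg_right (by linarith) hnL
    nlinarith [hcross]
  -- triangle inequality for L
  have hLtri : L ≤ Bh + Bb := by
    rw [hL, hBh, hBb, ← Finset.sum_add_distrib]
    refine Finset.sum_le_sum fun j _ => ?_
    have : Δ j = βhat j - β j := rfl
    rw [this]
    exact abs_sub _ _
  have hcross3 : lam * ((n:ℝ) * L) ≤ lam * ((n:ℝ) * (Bh + Bb)) := by
    apply mul_le_mul_of_nonneg_left _ hlam
    exact mul_le_mul_of_nonneg_left hLtri hnpos.le
  -- P bound
  have hPbound : P ≤ 2 * H + 2 * Bq := by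
    rw [hP, hH, hBq, Finset.mul_sum, Finset.mul_sum, ← Finset.sum_add_distrib]
    refine Finset.sum_le_sum fun j _ => ?_
    have : Δ j = βhat j - β j := rfl
    rw [this]
    nlinarith [sq_nonneg (βhat j + β j)]
  have hPα : α * P ≤ α * (2 * H + 2 * Bq) := mul_le_mul_of_nonneg_left hPbound hα
  -- scaled basic inequality from hmin
  have hm := hmin β
  have heβ : ∑ i, (Y i - X.mulVec β i)^2 = ∑ i, (e i)^2 := by
    refine Finset.sum_congr rfl fun i _ => ?_
    rw [hY]; simp [Pi.add_apply]
  rw [hexp, heβ] at hm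
  set E : ℝ := ∑ i, (e i)^2 with hE
  have key : (E - 2*T + Q + 2*α*H) + (n:ℝ)*(lam*Bh) ≤ (E + 2*α*Bq) + (n:ℝ)*(lam*Bb) := by
    have h2 := mul_le_mul_of_nonneg_left hm hnpos.le
    have h3 : (n:ℝ) * ((1/(n:ℝ)) * ((E - 2 * T + Q) + 2 * α * H) + lam * Bh)
        = (E - 2*T + Q + 2*α*H) + (n:ℝ)*(lam*Bh) := by
      field_simp
    have h4 : (n:ℝ) * ((1/(n:ℝ)) * (E + 2 * α * Bq) + lam * Bb)
        = (E + 2*α*Bq) + (n:ℝ)*(lam*Bb) := by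
      field_simp
    calc (E - 2*T + Q + 2*α*H) + (n:ℝ)*(lam*Bh) = _ := h3.symm
      _ ≤ _ := h2
      _ = _ := h4
  -- nonnegativity
  have hBhnn : 0 ≤ Bh := Finset.sum_nonneg fun j _ => abs_nonneg _
  have hnlamBh : 0 ≤ (n:ℝ) * (lam * Bh) :=
    mul_nonneg hnpos.le (mul_nonneg hlam hBhnn)
  -- main scaled bound
  have main : 2 * (Q + α * P) ≤ 3 * lam * Bb * n + 8 * α * Bq := by
    linarith [key, hcross2, hcross3, hPα, hnlamBh]
  -- divide by n
  rw [hquad]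
  have step1 : (2 / (n:ℝ)) * (Q + α * P) = (2 * (Q + α * P)) / n := by ring
  have step2 : (3 * lam * Bb * n + 8 * α * Bq) / (n:ℝ) = 3 * lam * Bb + (8 * α / n) * Bq := by
    field_simp
  rw [step1, ← step2]
  exact (div_le_div_iff_of_pos_right hnpos).mpr main
end

section
/- In the setting of the elastic net tail inequality: let $\hat{\beta}$ minimize $\frac{1}{n}[\|Y-\mathbf{X}\beta'\|_2^2 + 2\alpha\|\beta'\|_2^2] + \lambda\|\beta'\|_1$, with $\|\beta\|_1 \le b$, $D = \mathbf{X}^{\top}\mathbf{X}+\alpha I$, $\lambda = 4\sigma L\sqrt{(\gamma^2 + 2\log d)/n}$. If the event $\max_{r\in[d]}(2|\epsilon^{\top}X^r|/n) \le \lambda/2$ holds, then $\|\hat{\beta}-\beta\|_D^2 \le 6\sigma L b\sqrt{n(\gamma^2 + 2\log d)} + 4\alpha b^2$. -/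
open Matrix Finset

/-- Deterministic part of the elastic net tail inequality. -/
theorem elastic_net_tail_deterministic {n d : ℕ} (hn : 1 ≤ n)
    (X : Matrix (Fin n) (Fin d) ℝ) (β βhat : Fin d → ℝ) (e : Fin n → ℝ)
    (Y : Fin n → ℝ) (hY : Y = X.mulVec β + e)
    (σ L b γ : ℝ) (hσ : 0 < σ) (hL : 0 < L) (hb : 0 < b) (hγ : 0 < γ)
    (α lam : ℝ) (hα : 0 ≤ α)
    (hlam : lam = 4 * σ * L * Real.sqrt ((γ ^ 2 + 2 * Real.log d) / n))
    (hβ1 : ∑ j, |β j| ≤ b)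
    (hmin : ∀ β' : Fin d → ℝ,
      (1 / n) * ((∑ i, (Y i - X.mulVec βhat i) ^ 2) + 2 * α * ∑ j, (βhat j) ^ 2)
          + lam * ∑ j, |βhat j|
        ≤ (1 / n) * ((∑ i, (Y i - X.mulVec β' i) ^ 2) + 2 * α * ∑ j, (β' j) ^ 2)
          + lam * ∑ j, |β' j|)
    (hevent : ∀ r : Fin d, 2 * |e ⬝ᵥ (fun i => X i r)| / n ≤ lam / 2) :
    (βhat - β) ⬝ᵥ (Xᵀ * X + α • (1 : Matrix (Fin d) (Fin d) ℝ)).mulVec (βhat - β)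
      ≤ 6 * σ * L * b * Real.sqrt (n * (γ ^ 2 + 2 * Real.log d)) + 4 * α * b ^ 2 := by
  subst hY
  have hn0 : (0:ℝ) < n := by exact_mod_cast hn
  have hn' : (n:ℝ) ≠ 0 := ne_of_gt hn0
  set c : ℝ := γ ^ 2 + 2 * Real.log d with hc
  set Δ : Fin d → ℝ := βhat - β with hΔ
  set u : Fin n → ℝ := X.mulVec Δ with hu
  have hc0 : 0 < c := by
    have hlog : 0 ≤ Real.log d := by
      rcases Nat.eq_zero_or_pos d with h | h
      · simp [h]
      · exact Real.log_nonneg (by exact_mod_cast h)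
    nlinarith [sq_nonneg γ, hγ]
  have hlam0 : 0 ≤ lam := by rw [hlam]; positivity
  -- quadratic form identity
  have hQ : Δ ⬝ᵥ (Xᵀ * X + α • (1 : Matrix (Fin d) (Fin d) ℝ)).mulVec Δ
      = (∑ i, u i ^ 2) + α * ∑ j, Δ j ^ 2 := by
    rw [Matrix.add_mulVec, dotProduct_add]
    congr 1
    · rw [← Matrix.mulVec_mulVec]
      simp only [dotProduct, Matrix.mulVec, Matrix.transpose_apply, dotProduct,
        Finset.mul_sum, Finset.sum_mul, hu]
      rw [Finset.sum_comm]
      refine Finset.sum_congr rfl fun i _ => ?_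
      rw [sq, Finset.sum_mul]
      refine Finset.sum_congr rfl fun j _ => ?_
      simp only [Finset.mul_sum]
      exact Finset.sum_congr rfl fun k _ => by ring
    · simp [Matrix.smul_mulVec, Matrix.one_mulVec, dotProduct, Finset.mul_sum, sq]
      exact Finset.sum_congr rfl fun k _ => by ring
  -- residual identity
  have hres : ∀ i, (X.mulVec β + e) i - X.mulVec βhat i = e i - u i := by
    intro i
    simp [hu, hΔ, Matrix.mulVec_sub, Pi.sub_apply, Pi.add_apply]
    ring
  have hexp : ∑ i, ((X.mulVec β + e) i - X.mulVec βhat i) ^ 2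
      = (∑ i, e i ^ 2) - 2 * (e ⬝ᵥ u) + ∑ i, u i ^ 2 := by
    simp only [hres, dotProduct]
    rw [Finset.mul_sum, ← Finset.sum_sub_distrib, ← Finset.sum_add_distrib]
    exact Finset.sum_congr rfl fun i _ => by ring
  have hA : ∑ i, ((X.mulVec β + e) i - X.mulVec β i) ^ 2 = ∑ i, e i ^ 2 := by simp
  -- basic inequality multiplied by n
  have key : (∑ i, u i ^ 2) + 2 * α * ∑ j, (βhat j) ^ 2
      ≤ 2 * (e ⬝ᵥ u) + 2 * α * ∑ j, (β j) ^ 2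
        + n * lam * (∑ j, |β j|) - n * lam * (∑ j, |βhat j|) := by
    have h := hmin β
    rw [hexp, hA] at h
    have h2 := mul_le_mul_of_nonneg_left h hn0.le
    have e1 : (n:ℝ) * ((1 / n) * (((∑ i, e i ^ 2) - 2 * (e ⬝ᵥ u) + ∑ i, u i ^ 2)
          + 2 * α * ∑ j, (βhat j) ^ 2) + lam * ∑ j, |βhat j|)
        = ((∑ i, e i ^ 2) - 2 * (e ⬝ᵥ u) + ∑ i, u i ^ 2)
          + 2 * α * ∑ j, (βhat j) ^ 2 + n * lam * ∑ j, |βhat j| := by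
      field_simp
    have e2 : (n:ℝ) * ((1 / n) * ((∑ i, e i ^ 2) + 2 * α * ∑ j, (β j) ^ 2) + lam * ∑ j, |β j|)
        = (∑ i, e i ^ 2) + 2 * α * ∑ j, (β j) ^ 2 + n * lam * ∑ j, |β j| := by
      field_simp
    rw [e1, e2] at h2
    linarith
  -- dot product bound
  have hdot : e ⬝ᵥ u = ∑ r, Δ r * (e ⬝ᵥ fun i => X i r) := by
    simp only [dotProduct, hu, Matrix.mulVec, dotProduct, Finset.mul_sum]
    rw [Finset.sum_comm]
    exact Finset.sum_congr rfl fun r _ => Finset.sum_congr rfl fun i _ => by ring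
  have hbound : 2 * (e ⬝ᵥ u) ≤ (n * lam / 2) * ∑ r, |Δ r| := by
    rw [hdot, Finset.mul_sum, Finset.mul_sum]
    refine Finset.sum_le_sum fun r _ => ?_
    have h1 := hevent r
    have h2 : |e ⬝ᵥ fun i => X i r| ≤ n * lam / 4 := by
      rw [div_le_div_iff₀ hn0 (by norm_num : (0:ℝ) < 2)] at h1
      linarith
    have h3 : Δ r * (e ⬝ᵥ fun i => X i r) ≤ |Δ r| * |e ⬝ᵥ fun i => X i r| := by
      calc Δ r * (e ⬝ᵥ fun i => X i r) ≤ |Δ r * (e ⬝ᵥ fun i => X i r)| := le_abs_self _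
        _ = |Δ r| * |e ⬝ᵥ fun i => X i r| := abs_mul _ _
    nlinarith [abs_nonneg (Δ r)]
  -- triangle inequality
  have htri : ∑ r, |Δ r| ≤ (∑ j, |βhat j|) + ∑ j, |β j| := by
    rw [← Finset.sum_add_distrib]
    refine Finset.sum_le_sum fun j _ => ?_
    simp only [hΔ, Pi.sub_apply]
    calc |βhat j - β j| = |βhat j + -β j| := by ring_nf
      _ ≤ |βhat j| + |-β j| := abs_add_le _ _
      _ = |βhat j| + |β j| := by rw [abs_neg]
  have hB0 : (0:ℝ) ≤ ∑ j, |β j| := Finset.sum_nonneg fun _ _ => abs_nonneg _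
  have hBh0 : (0:ℝ) ≤ ∑ j, |βhat j| := Finset.sum_nonneg fun _ _ => abs_nonneg _
  -- ℓ2 ≤ ℓ1 bound
  have hsq : ∑ j, (β j) ^ 2 ≤ b ^ 2 := by
    have h1 : ∑ j, (β j) ^ 2 ≤ (∑ j, |β j|) ^ 2 := by
      have := Finset.sum_sq_le_sq_sum_of_nonneg (s := univ)
        (f := fun j => |β j|) (fun i _ => abs_nonneg _)
      simpa [sq_abs] using this
    have h2 : (∑ j, |β j|) ^ 2 ≤ b ^ 2 := pow_le_pow_left₀ hB0 hβ1 2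
    linarith
  have hΔsq : ∑ j, Δ j ^ 2 ≤ 2 * ∑ j, (βhat j) ^ 2 + 2 * ∑ j, (β j) ^ 2 := by
    rw [Finset.mul_sum, Finset.mul_sum, ← Finset.sum_add_distrib]
    refine Finset.sum_le_sum fun j _ => ?_
    simp only [hΔ, Pi.sub_apply]
    nlinarith [sq_nonneg (βhat j + β j)]
  -- n * lam identity
  have hnlam : (n:ℝ) * lam = 4 * σ * L * Real.sqrt (n * c) := by
    have hsq2 : (n:ℝ) * Real.sqrt (c / n) = Real.sqrt (n * c) := by
      rw [show (n:ℝ) * c = (n:ℝ)^2 * (c / n) by field_simp,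
        Real.sqrt_mul (by positivity), Real.sqrt_sq hn0.le]
    rw [hlam, ← hsq2]; ring
  have hfin : (3/2) * ((n:ℝ) * lam) * b = 6 * σ * L * b * Real.sqrt (n * c) := by
    rw [hnlam]; ring
  -- combine
  have hnl0 : (0:ℝ) ≤ n * lam := mul_nonneg hn0.le hlam0
  have t1 : (n * lam / 2) * (∑ r, |Δ r|)
      ≤ n * lam / 2 * (∑ j, |βhat j|) + n * lam / 2 * (∑ j, |β j|) := by
    calc (n * lam / 2) * (∑ r, |Δ r|) ≤ (n * lam / 2) * ((∑ j, |βhat j|) + ∑ j, |β j|) :=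
          mul_le_mul_of_nonneg_left htri (by positivity)
      _ = _ := by ring
  have t2 : (n:ℝ) * lam * (∑ j, |β j|) ≤ n * lam * b := mul_le_mul_of_nonneg_left hβ1 hnl0
  have t3 : (0:ℝ) ≤ n * lam * (∑ j, |βhat j|) := mul_nonneg hnl0 hBh0
  have t4 : α * ∑ j, Δ j ^ 2 ≤ α * (2 * ∑ j, (βhat j) ^ 2 + 2 * ∑ j, (β j) ^ 2) :=
    mul_le_mul_of_nonneg_left hΔsq hα
  have t5 : α * ∑ j, (β j) ^ 2 ≤ α * b ^ 2 := mul_le_mul_of_nonneg_left hsq hα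
  rw [hQ]
  linarith [key, hbound, t1, t2, t3, t4, t5, hfin]
end
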